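/- arXiv:2111.03766 — 3 statements merged into one kernel-verified Lean document; each statement's English description precedes it below -/
import Mathlib

section
/- Fix A > 0 and a wavenumber α > 0. For every h ∈ M_A, the squared fundamental shallow sloshing frequency without surface tension, defined by λ^∞_{α,1}(h) := inf{ ∫_{−1}^{1} h(x)[(ψ′(x))² + α²ψ(x)²] dx : ψ ∈ C¹([−1,1]), ∫_{−1}^{1} ψ(x)² dx = 1 }, satisfies λ^∞_{α,1}(h) ≤ α²A/2. Moreover, equality holds for the rectangular cross-section: for the constant function h ≡ A/2 one has λ^∞_{α,1}(A/2) = α²A/2. -/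
/-- `h ∈ M_A`: continuous, nonnegative on `[-1,1]`, with `∫_{-1}^1 h = A`. -/
def MemMA (A : ℝ) (h : ℝ → ℝ) : Prop :=
  ContinuousOn h (Set.Icc (-1 : ℝ) 1) ∧ (∀ x ∈ Set.Icc (-1 : ℝ) 1, 0 ≤ h x) ∧
    (∫ x in (-1 : ℝ)..1, h x) = A

/-- The squared fundamental shallow sloshing frequency without surface tension:
`λ^∞_{α,1}(h) = inf { ∫_{-1}^1 h [(ψ')² + α² ψ²] : ψ ∈ C¹, ∫ ψ² = 1 }`. -/
noncomputable def lamInf (α : ℝ) (h : ℝ → ℝ) : ℝ :=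
  sInf {E : ℝ | ∃ ψ : ℝ → ℝ, ContDiff ℝ 1 ψ ∧
    (∫ x in (-1 : ℝ)..1, (ψ x) ^ 2) = 1 ∧
    E = ∫ x in (-1 : ℝ)..1, h x * ((deriv ψ x) ^ 2 + α ^ 2 * (ψ x) ^ 2)}

/-!
The constant test function `ψ ≡ 1/√2` has no kinetic energy, so its Rayleigh quotient is
`α²/2 ∫ h`, which bounds `λ^∞_{α,1}(h)` from above. For a constant depth `c ≥ 0` the potential
term alone gives `c α² ∫ ψ² = α² c` as a lower bound for every admissible `ψ`, so the bound is
attained.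
-/

open intervalIntegral

def sloshingEnergies (α : ℝ) (h : ℝ → ℝ) : Set ℝ :=
  {E : ℝ | ∃ ψ : ℝ → ℝ, ContDiff ℝ 1 ψ ∧
    (∫ x in (-1 : ℝ)..1, (ψ x) ^ 2) = 1 ∧
    E = ∫ x in (-1 : ℝ)..1, h x * ((deriv ψ x) ^ 2 + α ^ 2 * (ψ x) ^ 2)}

section

variable {α : ℝ} {h : ℝ → ℝ}

theorem mul_integral_mem_sloshingEnergies (α : ℝ) (h : ℝ → ℝ) :
    α ^ 2 / 2 * ∫ x in (-1 : ℝ)..1, h x ∈ sloshingEnergies α h := by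
  have hsq : Real.sqrt (1 / 2) ^ 2 = (1 / 2 : ℝ) := Real.sq_sqrt (by norm_num)
  refine ⟨fun _ => Real.sqrt (1 / 2), contDiff_const, ?_, ?_⟩
  · norm_num [hsq]
  · simp only [deriv_const', hsq]
    rw [← integral_const_mul]
    congr 1
    ext x
    ring

theorem sloshingEnergies_bddBelow (hnn : ∀ x ∈ Set.Icc (-1 : ℝ) 1, 0 ≤ h x) :
    BddBelow (sloshingEnergies α h) := by
  refine ⟨0, ?_⟩
  rintro E ⟨ψ, -, -, rfl⟩
  refine integral_nonneg (by norm_num) fun x hx => ?_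
  have := hnn x hx
  positivity

theorem lamInf_le_mul_integral (hnn : ∀ x ∈ Set.Icc (-1 : ℝ) 1, 0 ≤ h x) :
    lamInf α h ≤ α ^ 2 / 2 * ∫ x in (-1 : ℝ)..1, h x :=
  csInf_le (sloshingEnergies_bddBelow hnn) (mul_integral_mem_sloshingEnergies α h)

theorem mul_le_of_mem_sloshingEnergies_const {c E : ℝ} (hc : 0 ≤ c)
    (hE : E ∈ sloshingEnergies α fun _ => c) : α ^ 2 * c ≤ E := by
  obtain ⟨ψ, hψ, hnorm, rfl⟩ := hE
  have hψc : Continuous ψ := hψ.continuous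
  have hdψc : Continuous (deriv ψ) := hψ.continuous_deriv le_rfl
  calc α ^ 2 * c = ∫ x in (-1 : ℝ)..1, c * (α ^ 2 * ψ x ^ 2) := by
        rw [integral_const_mul, integral_const_mul, hnorm]; ring
    _ ≤ ∫ x in (-1 : ℝ)..1, c * (deriv ψ x ^ 2 + α ^ 2 * ψ x ^ 2) := by
        refine integral_mono_on (by norm_num)
          ((by fun_prop : Continuous _).intervalIntegrable _ _)
          ((by fun_prop : Continuous _).intervalIntegrable _ _) fun x _ => ?_
        have := sq_nonneg (deriv ψ x)
        gcongr
        linarith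

theorem lamInf_const {c : ℝ} (hc : 0 ≤ c) : lamInf α (fun _ => c) = α ^ 2 * c := by
  have hmem := mul_integral_mem_sloshingEnergies α fun _ => c
  have hval : α ^ 2 / 2 * ∫ _ in (-1 : ℝ)..1, c = α ^ 2 * c := by norm_num; ring
  rw [hval] at hmem
  exact le_antisymm (csInf_le ⟨_, fun _ => mul_le_of_mem_sloshingEnergies_const hc⟩ hmem)
    (le_csInf ⟨_, hmem⟩ fun _ => mul_le_of_mem_sloshingEnergies_const hc)

end

theorem isoperimetric_no_surface_tension_general (A α : ℝ) (hA : 0 < A) :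
    (∀ h : ℝ → ℝ, MemMA A h → lamInf α h ≤ α ^ 2 * A / 2) ∧
    lamInf α (fun _ => A / 2) = α ^ 2 * A / 2 := by
  refine ⟨fun h ⟨_, hnn, hint⟩ => ?_, ?_⟩
  · calc lamInf α h ≤ α ^ 2 / 2 * A := hint ▸ lamInf_le_mul_integral hnn
      _ = α ^ 2 * A / 2 := by ring
  · rw [lamInf_const (by positivity)]
    ring

theorem isoperimetric_no_surface_tension (A α : ℝ) (hA : 0 < A) (hα : 0 < α) :
    (∀ h : ℝ → ℝ, MemMA A h → lamInf α h ≤ α ^ 2 * A / 2) ∧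
    lamInf α (fun _ => A / 2) = α ^ 2 * A / 2 :=
  isoperimetric_no_surface_tension_general A α hA
end

section
/- Fix A > 0 and a Bond number B > 0, and set λ*₀ := (3A/2)·[1 − 3(√B − tanh(√B))/(B·tanh(√B))]^{−1}. Then for every h ∈ M_A, the squared fundamental shallow sloshing frequency with surface tension satisfies λ_{0,1}(h) := Ω_{0,1}(h)² ≤ λ*₀. -/
/-- Admissible pairs `(ψ, ζ)` in `X_α`: `C¹` functions with `ζ(±1) = 0`, and
additionally `∫ ζ = 0` when `α = 0`. -/
def AdmissiblePair (α : ℝ) (ψ ζ : ℝ → ℝ) : Prop :=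
  ContDiff ℝ 1 ψ ∧ ContDiff ℝ 1 ζ ∧ ζ (-1) = 0 ∧ ζ 1 = 0 ∧
    (α = 0 → (∫ x in (-1 : ℝ)..1, ζ x) = 0)

/-- The energy `E_α(h; ψ, ζ)`. -/
noncomputable def energyC (B α : ℝ) (h ψ ζ : ℝ → ℝ) : ℝ :=
  (1 / 2) * (∫ x in (-1 : ℝ)..1, h x * ((deriv ψ x) ^ 2 + α ^ 2 * (ψ x) ^ 2)) +
    (1 / 2) * (∫ x in (-1 : ℝ)..1,
      ((1 + α ^ 2 / B) * (ζ x) ^ 2 + (1 / B) * (deriv ζ x) ^ 2))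

/-- The fundamental shallow sloshing frequency
`Ω_{α,1}(h) = inf {E_α(h; ψ, ζ) : (ψ, ζ) ∈ X_α, G(ψ, ζ) = 1}`. -/
noncomputable def Omega1 (B α : ℝ) (h : ℝ → ℝ) : ℝ :=
  sInf {E : ℝ | ∃ ψ ζ : ℝ → ℝ, AdmissiblePair α ψ ζ ∧
    (∫ x in (-1 : ℝ)..1, ψ x * ζ x) = 1 ∧ E = energyC B α h ψ ζ}

/-!
Test the Rayleigh quotient with `ψ(x) = x` and the surface profile
`ζ(x) = x - sinh (√B x) / sinh √B`, the solution of `ζ - ζ'' / B = x`, `ζ(±1) = 0` (odd, so of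
mean zero). Integrating `ζ ζ''` by parts, that equation makes the surface part of the energy
equal to `c := G(ψ, ζ) = (2/3) (1 - 3 (√B - tanh √B) / (B tanh √B))`, while the kinetic part is
`∫ h = A`. Rescaling to `(b ψ, a ζ)` with `a b c = 1` and both parts equal gives
`Ω ≤ √(A c) / c`, i.e. `Ω² ≤ A / c = λ*₀`; `c > 0` is the inequality `3 (x - tanh x) < x² tanh x`.
-/

open Real intervalIntegral

theorem integral_eq_zero_of_odd {E : Type*} [NormedAddCommGroup E] [NormedSpace ℝ E]
    {f : ℝ → E} (hf : Function.Odd f) (a : ℝ) : ∫ x in -a..a, f x = 0 := by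
  have h := integral_comp_neg (a := -a) (b := a) f
  simp only [hf _, integral_neg, neg_neg] at h
  have h2 : (2 : ℝ) • ∫ x in -a..a, f x = 0 := by
    rw [two_smul]
    nth_rewrite 1 [← h]
    exact neg_add_cancel _
  exact (smul_eq_zero.mp h2).resolve_left two_ne_zero

theorem pos_of_hasDerivAt_of_deriv_pos {f f' : ℝ → ℝ} (hf : ∀ x, HasDerivAt f (f' x) x)
    (h₀ : f 0 = 0) (hf' : ∀ x, 0 < x → 0 < f' x) {x : ℝ} (hx : 0 < x) : 0 < f x := by
  have hmono : StrictMonoOn f (Set.Ici 0) := by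
    refine strictMonoOn_of_deriv_pos (convex_Ici 0)
      (fun y _ => (hf y).continuousAt.continuousWithinAt) fun y hy => ?_
    rw [interior_Ici] at hy
    exact (hf y).deriv ▸ hf' y hy
  simpa [h₀] using hmono Set.self_mem_Ici hx.le hx

theorem Real.sinh_lt_mul_cosh {x : ℝ} (hx : 0 < x) : sinh x < x * cosh x := by
  have hd : ∀ y, HasDerivAt (fun y => y * cosh y - sinh y) (y * sinh y) y := fun y =>
    (((hasDerivAt_id' y).mul (hasDerivAt_cosh y)).sub (hasDerivAt_sinh y)).congr_deriv (by ring)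
  have := pos_of_hasDerivAt_of_deriv_pos hd (by simp)
    (fun y hy => mul_pos hy (sinh_pos_iff.mpr hy)) hx
  linarith

theorem Real.three_mul_sub_tanh_lt {x : ℝ} (hx : 0 < x) : 3 * (x - tanh x) < x ^ 2 * tanh x := by
  have hd : ∀ y, HasDerivAt (fun y => (y ^ 2 + 3) * sinh y - 3 * y * cosh y)
      (y * (y * cosh y - sinh y)) y := fun y =>
    ((((hasDerivAt_pow 2 y).add_const 3).mul (hasDerivAt_sinh y)).sub
      (((hasDerivAt_id' y).const_mul 3).mul (hasDerivAt_cosh y))).congr_deriv (by push_cast; ring)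
  have hpos := pos_of_hasDerivAt_of_deriv_pos hd (by simp)
    (fun y hy => mul_pos hy (sub_pos.mpr (sinh_lt_mul_cosh hy))) hx
  have hC := cosh_pos x
  rw [tanh_eq_sinh_div_cosh, ← sub_pos]
  field_simp
  linarith

theorem integral_sq_add_deriv_sq_eq_integral_mul {a b B : ℝ} {f f' f'' g : ℝ → ℝ}
    (hf : ∀ x ∈ Set.uIcc a b, HasDerivAt f (f' x) x)
    (hf' : ∀ x ∈ Set.uIcc a b, HasDerivAt f' (f'' x) x)
    (hf'' : IntervalIntegrable f'' MeasureTheory.volume a b) (ha : f a = 0) (hb : f b = 0)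
    (hode : ∀ x ∈ Set.uIcc a b, f x - f'' x / B = g x) :
    ∫ x in a..b, (f x ^ 2 + 1 / B * f' x ^ 2) = ∫ x in a..b, g x * f x := by
  have hfc : ContinuousOn f (Set.uIcc a b) := fun x hx => (hf x hx).continuousAt.continuousWithinAt
  have hf'c : ContinuousOn f' (Set.uIcc a b) :=
    fun x hx => (hf' x hx).continuousAt.continuousWithinAt
  have hparts : ∫ x in a..b, f' x * f' x = -∫ x in a..b, f x * f'' x := by
    rw [integral_mul_deriv_eq_deriv_mul hf hf' hf'c.intervalIntegrable hf'', ha, hb]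
    ring
  have hsq : IntervalIntegrable (fun x => f x ^ 2) MeasureTheory.volume a b :=
    (hfc.pow 2).intervalIntegrable
  have hsq' : IntervalIntegrable (fun x => 1 / B * f' x ^ 2) MeasureTheory.volume a b :=
    ((hf'c.pow 2).intervalIntegrable).const_mul _
  have hff'' : IntervalIntegrable (fun x => 1 / B * (f x * f'' x)) MeasureTheory.volume a b :=
    (hf''.continuousOn_mul hfc).const_mul _
  calc ∫ x in a..b, (f x ^ 2 + 1 / B * f' x ^ 2)
      = (∫ x in a..b, f x ^ 2) + 1 / B * ∫ x in a..b, f' x * f' x := by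
        rw [integral_add hsq hsq', integral_const_mul]
        simp only [sq]
    _ = ∫ x in a..b, (f x ^ 2 - 1 / B * (f x * f'' x)) := by
        rw [hparts, integral_sub hsq hff'', integral_const_mul]
        ring
    _ = ∫ x in a..b, g x * f x := by
        refine integral_congr fun x hx => ?_
        rw [← hode x hx]
        ring

noncomputable def kineticEnergy (α : ℝ) (h ψ : ℝ → ℝ) : ℝ :=
  ∫ x in (-1 : ℝ)..1, h x * ((deriv ψ x) ^ 2 + α ^ 2 * (ψ x) ^ 2)

noncomputable def surfaceEnergy (B α : ℝ) (ζ : ℝ → ℝ) : ℝ :=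
  ∫ x in (-1 : ℝ)..1, ((1 + α ^ 2 / B) * (ζ x) ^ 2 + (1 / B) * (deriv ζ x) ^ 2)

lemma energyC_eq (B α : ℝ) (h ψ ζ : ℝ → ℝ) :
    energyC B α h ψ ζ = kineticEnergy α h ψ / 2 + surfaceEnergy B α ζ / 2 := by
  rw [energyC, kineticEnergy, surfaceEnergy]
  ring

lemma kineticEnergy_nonneg {α : ℝ} {h : ℝ → ℝ} (hh : ∀ x ∈ Set.Icc (-1 : ℝ) 1, 0 ≤ h x)
    (ψ : ℝ → ℝ) : 0 ≤ kineticEnergy α h ψ :=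
  integral_nonneg (by norm_num) fun x hx => mul_nonneg (hh x hx) (by positivity)

lemma surfaceEnergy_nonneg {B : ℝ} (hB : 0 ≤ B) (α : ℝ) (ζ : ℝ → ℝ) :
    0 ≤ surfaceEnergy B α ζ :=
  integral_nonneg (by norm_num) fun x _ => by positivity

lemma kineticEnergy_const_mul (α : ℝ) (h ψ : ℝ → ℝ) (b : ℝ) :
    kineticEnergy α h (fun x => b * ψ x) = b ^ 2 * kineticEnergy α h ψ := by
  rw [kineticEnergy, kineticEnergy, deriv_const_mul_field', ← integral_const_mul]
  congr 1 with x
  ring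

lemma surfaceEnergy_const_mul (B α : ℝ) (ζ : ℝ → ℝ) (a : ℝ) :
    surfaceEnergy B α (fun x => a * ζ x) = a ^ 2 * surfaceEnergy B α ζ := by
  rw [surfaceEnergy, surfaceEnergy, deriv_const_mul_field', ← integral_const_mul]
  congr 1 with x
  ring

lemma AdmissiblePair.const_mul {α : ℝ} {ψ ζ : ℝ → ℝ} (hadm : AdmissiblePair α ψ ζ) (b a : ℝ) :
    AdmissiblePair α (fun x => b * ψ x) (fun x => a * ζ x) := by
  obtain ⟨hψ, hζ, hζm, hζp, hmean⟩ := hadm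
  refine ⟨contDiff_const.mul hψ, contDiff_const.mul hζ, by simp [hζm], by simp [hζp], fun hα => ?_⟩
  rw [integral_const_mul, hmean hα, mul_zero]

lemma energyC_nonneg {B : ℝ} (hB : 0 ≤ B) {α : ℝ} {h : ℝ → ℝ}
    (hh : ∀ x ∈ Set.Icc (-1 : ℝ) 1, 0 ≤ h x) (ψ ζ : ℝ → ℝ) : 0 ≤ energyC B α h ψ ζ := by
  rw [energyC_eq]
  have := kineticEnergy_nonneg (α := α) hh ψ
  have := surfaceEnergy_nonneg hB α ζ
  positivity

lemma Omega1_nonneg {B α : ℝ} (hB : 0 ≤ B) {h : ℝ → ℝ}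
    (hh : ∀ x ∈ Set.Icc (-1 : ℝ) 1, 0 ≤ h x) : 0 ≤ Omega1 B α h :=
  Real.sInf_nonneg <| by
    rintro _ ⟨ψ, ζ, -, -, rfl⟩
    exact energyC_nonneg hB hh ψ ζ

lemma Omega1_le_energyC {B α : ℝ} (hB : 0 ≤ B) {h ψ ζ : ℝ → ℝ}
    (hh : ∀ x ∈ Set.Icc (-1 : ℝ) 1, 0 ≤ h x) (hadm : AdmissiblePair α ψ ζ)
    (hG : ∫ x in (-1 : ℝ)..1, ψ x * ζ x = 1) : Omega1 B α h ≤ energyC B α h ψ ζ := by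
  refine csInf_le ⟨0, ?_⟩ ⟨ψ, ζ, hadm, hG, rfl⟩
  rintro _ ⟨ψ', ζ', -, -, rfl⟩
  exact energyC_nonneg hB hh ψ' ζ'

theorem Omega1_sq_le {B α : ℝ} (hB : 0 ≤ B) {h ψ ζ : ℝ → ℝ}
    (hh : ∀ x ∈ Set.Icc (-1 : ℝ) 1, 0 ≤ h x) (hadm : AdmissiblePair α ψ ζ) {G : ℝ} (hG₀ : 0 < G)
    (hG : ∫ x in (-1 : ℝ)..1, ψ x * ζ x = G) (hP : 0 < kineticEnergy α h ψ)
    (hQ : 0 < surfaceEnergy B α ζ) :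
    Omega1 B α h ^ 2 ≤ kineticEnergy α h ψ * surfaceEnergy B α ζ / G ^ 2 := by
  set P := kineticEnergy α h ψ
  set Q := surfaceEnergy B α ζ
  set m := √(P * Q) / G with hm
  have hm₀ : 0 < m := by positivity
  set b := √(m / P)
  set a := √(m / Q)
  have hb : b ^ 2 * P = m := by rw [sq_sqrt (by positivity)]; field_simp
  have ha : a ^ 2 * Q = m := by rw [sq_sqrt (by positivity)]; field_simp
  have hm2 : m ^ 2 = P * Q / G ^ 2 := by rw [hm, div_pow, sq_sqrt (by positivity)]
  have hab : a * b * G = 1 := by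
    have : (a * b * G) ^ 2 = 1 := by
      calc (a * b * G) ^ 2 = (a ^ 2 * Q) * (b ^ 2 * P) * G ^ 2 / (P * Q) := by field_simp
        _ = 1 := by rw [ha, hb, ← sq, hm2]; field_simp
    nlinarith [show 0 ≤ a * b * G by positivity]
  have hE : energyC B α h (fun x => b * ψ x) (fun x => a * ζ x) = m := by
    rw [energyC_eq, kineticEnergy_const_mul, surfaceEnergy_const_mul]
    linear_combination (hb + ha) / 2
  have hG' : ∫ x in (-1 : ℝ)..1, b * ψ x * (a * ζ x) = 1 := by
    simp_rw [show ∀ x, b * ψ x * (a * ζ x) = (a * b) * (ψ x * ζ x) from fun x => by ring]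
    rw [integral_const_mul, hG, hab]
  have hΩ := Omega1_le_energyC hB hh (hadm.const_mul b a) hG'
  rw [hE] at hΩ
  calc Omega1 B α h ^ 2 ≤ m ^ 2 := pow_le_pow_left₀ (Omega1_nonneg hB hh) hΩ 2
    _ = P * Q / G ^ 2 := hm2

noncomputable def sloshProfile (s x : ℝ) : ℝ :=
  x - sinh (s * x) / sinh s

lemma hasDerivAt_sloshProfile (s x : ℝ) :
    HasDerivAt (sloshProfile s) (1 - s * cosh (s * x) / sinh s) x :=
  ((hasDerivAt_id' x).sub ((((hasDerivAt_id' x).const_mul s).sinh).div_const (sinh s))).congr_deriv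
    (by ring)

lemma hasDerivAt_deriv_sloshProfile (s x : ℝ) :
    HasDerivAt (fun x => 1 - s * cosh (s * x) / sinh s) (-(s ^ 2 * sinh (s * x) / sinh s)) x :=
  ((((hasDerivAt_id' x).const_mul s).cosh.const_mul s).div_const (sinh s)).const_sub 1
    |>.congr_deriv (by ring)

lemma sloshProfile_neg (s x : ℝ) : sloshProfile s (-x) = -sloshProfile s x := by
  simp only [sloshProfile, mul_neg, sinh_neg]
  ring

lemma sloshProfile_one {s : ℝ} (hs : s ≠ 0) : sloshProfile s 1 = 0 := by
  simp [sloshProfile, sinh_ne_zero.mpr hs]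

lemma sloshProfile_neg_one {s : ℝ} (hs : s ≠ 0) : sloshProfile s (-1) = 0 := by
  rw [sloshProfile_neg, sloshProfile_one hs, neg_zero]

lemma admissiblePair_sloshProfile {s : ℝ} (hs : s ≠ 0) :
    AdmissiblePair 0 (fun x => x) (sloshProfile s) := by
  refine ⟨contDiff_id, ?_, sloshProfile_neg_one hs, sloshProfile_one hs, fun _ =>
    integral_eq_zero_of_odd (sloshProfile_neg s) 1⟩
  exact contDiff_id.sub ((contDiff_const.mul contDiff_id).sinh.div_const _)

lemma integral_mul_sloshProfile {s : ℝ} (hs : s ≠ 0) :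
    ∫ x in (-1 : ℝ)..1, x * sloshProfile s x =
      2 / 3 * (1 - 3 * (s - tanh s) / (s ^ 2 * tanh s)) := by
  have hS : sinh s ≠ 0 := sinh_ne_zero.mpr hs
  have hF : ∀ x ∈ Set.uIcc (-1 : ℝ) 1, HasDerivAt
      (fun x => x ^ 3 / 3 - (x * cosh (s * x) / s - sinh (s * x) / s ^ 2) / sinh s)
      (x * sloshProfile s x) x := fun x _ => by
    have hsx := (hasDerivAt_id' x).const_mul s
    refine ((((hasDerivAt_pow 3 x).div_const 3).sub
      (((((hasDerivAt_id' x).mul hsx.cosh).div_const s).sub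
        (hsx.sinh.div_const (s ^ 2))).div_const (sinh s)))).congr_deriv ?_
    rw [sloshProfile]
    field_simp
    ring
  have hcont : Continuous fun x => x * sloshProfile s x := by
    unfold sloshProfile
    fun_prop
  rw [integral_eq_sub_of_hasDerivAt hF (hcont.intervalIntegrable _ _), tanh_eq_sinh_div_cosh]
  simp only [mul_one, mul_neg, cosh_neg, sinh_neg]
  have hC : cosh s ≠ 0 := (cosh_pos s).ne'
  field_simp
  ring

lemma surfaceEnergy_sloshProfile {s : ℝ} (hs : s ≠ 0) :
    surfaceEnergy (s ^ 2) 0 (sloshProfile s) = ∫ x in (-1 : ℝ)..1, x * sloshProfile s x := by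
  have hderiv : deriv (sloshProfile s) = fun x => 1 - s * cosh (s * x) / sinh s :=
    funext fun x => (hasDerivAt_sloshProfile s x).deriv
  have hcont : Continuous fun x => -(s ^ 2 * sinh (s * x) / sinh s) := by fun_prop
  rw [surfaceEnergy, hderiv]
  simp only [zero_pow two_ne_zero, zero_div, add_zero, one_mul]
  refine integral_sq_add_deriv_sq_eq_integral_mul (fun x _ => hasDerivAt_sloshProfile s x)
    (fun x _ => hasDerivAt_deriv_sloshProfile s x) (hcont.intervalIntegrable _ _)
    (sloshProfile_neg_one hs) (sloshProfile_one hs) fun x _ => ?_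
  rw [sloshProfile]
  field_simp
  ring

theorem isoperimetric_surface_tension_alpha_zero (A B : ℝ) (hA : 0 < A) (hB : 0 < B)
    (lam0 : ℝ)
    (hlam : lam0 = (3 * A / 2) * (1 - 3 * (Real.sqrt B - Real.tanh (Real.sqrt B)) /
      (B * Real.tanh (Real.sqrt B)))⁻¹) :
    ∀ h : ℝ → ℝ, MemMA A h → (Omega1 B 0 h) ^ 2 ≤ lam0 := by
  rintro h ⟨-, hh, hmass⟩
  set s := √B
  have hs : 0 < s := sqrt_pos.mpr hB
  have hsB : s ^ 2 = B := sq_sqrt hB.le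
  set K := 1 - 3 * (s - tanh s) / (B * tanh s)
  have hK : 0 < K := by
    have hT : 0 < tanh s := by
      rw [tanh_eq_sinh_div_cosh]
      exact div_pos (sinh_pos_iff.mpr hs) (cosh_pos s)
    rw [sub_pos, div_lt_one (by positivity), ← hsB]
    exact three_mul_sub_tanh_lt hs
  have hG : ∫ x in (-1 : ℝ)..1, x * sloshProfile s x = 2 / 3 * K := by
    rw [integral_mul_sloshProfile hs.ne', hsB]
  have hP : kineticEnergy 0 h (fun x => x) = A := by simp [kineticEnergy, hmass]
  have hQ : surfaceEnergy B 0 (sloshProfile s) = 2 / 3 * K := by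
    rw [← hG, ← surfaceEnergy_sloshProfile hs.ne', hsB]
  have hΩ := Omega1_sq_le hB.le hh (admissiblePair_sloshProfile hs.ne') (by positivity) hG
    (hP ▸ hA) (hQ ▸ by positivity)
  calc Omega1 B 0 h ^ 2 ≤ A * (2 / 3 * K) / (2 / 3 * K) ^ 2 := hP ▸ hQ ▸ hΩ
    _ = lam0 := by rw [hlam]; field_simp
end

section
/- Fix A > 0 and a Bond number B > 0, set λ*₀ := (3A/2)·[1 − 3(√B − tanh(√B))/(B·tanh(√B))]^{−1}, and define h₀*(x) := (λ*₀/2)(1 − x²) − (λ*₀/(√B·sinh(√B)))·[cosh(√B) − cosh(√B·x)] for x ∈ [−1,1]. Then: h₀* is even, h₀*(±1) = 0, h₀* is strictly decreasing on (0,1), h₀*(x) > 0 for all x ∈ (−1,1), ∫_{−1}^{1} h₀*(x) dx = A (so h₀* ∈ M_A), and the function −h₀* is not convex on [−1,1]. -/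
/-!
With `s = √B`, `h₀* = optimalShape s λ*₀`, whose derivative is `λ (sinh (s x) / sinh s - x)`.
Strict convexity of `sinh` on `[0, ∞)` gives `sinh (s x) < x sinh s` on `(0, 1)`, so for `λ > 0`
the profile decreases strictly on `[0, 1]` down to its zero at `1`, and evenness gives positivity
on `(-1, 1)`. Its integral is `(2/3) λ (1 - 3 (s - tanh s) / (s² tanh s))`; the bracket is
positive because `3 (s cosh s - sinh s) < s² sinh s`, so `λ*₀ > 0` and the integral is `A`.
Finally `h₀*` has a horizontal tangent at `1` while `h₀*(0) > 0 = h₀*(1)`: the chord of `-h₀*`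
from `0` to `1` is steeper than the tangent at `1`, which convexity forbids.
-/

open Real Set

namespace Real

lemma sinh_lt_mul_cosh_s2 {s : ℝ} (hs : 0 < s) : sinh s < s * cosh s := by
  have hmono : StrictMonoOn (fun t ↦ t * cosh t - sinh t) (Ici 0) := by
    refine strictMonoOn_of_deriv_pos (convex_Ici 0) (by fun_prop) fun t ht ↦ ?_
    rw [interior_Ici] at ht
    have hderiv : HasDerivAt (fun t ↦ t * cosh t - sinh t) (1 * cosh t + t * sinh t - cosh t) t :=
      ((hasDerivAt_id t).mul (hasDerivAt_cosh t)).sub (hasDerivAt_sinh t)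
    rw [hderiv.deriv]
    nlinarith [mul_pos (mem_Ioi.1 ht) (sinh_pos_iff.2 ht)]
  simpa using hmono self_mem_Ici hs.le hs

lemma three_mul_sub_lt_sq_mul_sinh {s : ℝ} (hs : 0 < s) :
    3 * (s * cosh s - sinh s) < s ^ 2 * sinh s := by
  have hmono : StrictMonoOn (fun t ↦ t ^ 2 * sinh t - 3 * (t * cosh t - sinh t)) (Ici 0) := by
    refine strictMonoOn_of_deriv_pos (convex_Ici 0) (by fun_prop) fun t ht ↦ ?_
    rw [interior_Ici] at ht
    have hderiv : HasDerivAt (fun t ↦ t ^ 2 * sinh t - 3 * (t * cosh t - sinh t))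
        (2 * t ^ 1 * sinh t + t ^ 2 * cosh t - 3 * (1 * cosh t + t * sinh t - cosh t)) t :=
      ((hasDerivAt_pow 2 t).mul (hasDerivAt_sinh t)).sub
        ((((hasDerivAt_id t).mul (hasDerivAt_cosh t)).sub (hasDerivAt_sinh t)).const_mul 3)
    rw [hderiv.deriv]
    nlinarith [mul_pos (mem_Ioi.1 ht) (sub_pos.2 (sinh_lt_mul_cosh_s2 ht))]
  simpa using hmono self_mem_Ici hs.le hs

lemma strictConvexOn_sinh : StrictConvexOn ℝ (Ici 0) sinh := by
  refine StrictMonoOn.strictConvexOn_of_deriv (convex_Ici 0) continuous_sinh.continuousOn ?_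
  rw [deriv_sinh, interior_Ici]
  exact cosh_strictMonoOn.mono Ioi_subset_Ici_self

lemma sinh_mul_lt_mul_sinh {s x : ℝ} (hs : 0 < s) (hx₀ : 0 < x) (hx₁ : x < 1) :
    sinh (s * x) < x * sinh s := by
  simpa [mul_comm s x] using
    strictConvexOn_sinh.2 self_mem_Ici hs.le hs.ne (sub_pos.2 hx₁) hx₀ (sub_add_cancel 1 x)

end Real

noncomputable def optimalShape (s lam x : ℝ) : ℝ :=
  lam / 2 * (1 - x ^ 2) - lam / (s * sinh s) * (cosh s - cosh (s * x))

noncomputable def shapeFactor (s : ℝ) : ℝ :=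
  1 - 3 * (s - tanh s) / (s ^ 2 * tanh s)

lemma shapeFactor_pos {s : ℝ} (hs : 0 < s) : 0 < shapeFactor s := by
  have hsinh := sinh_pos_iff.2 hs
  have hfactor :
      shapeFactor s = (s ^ 2 * sinh s - 3 * (s * cosh s - sinh s)) / (s ^ 2 * sinh s) := by
    rw [shapeFactor, tanh_eq_sinh_div_cosh]
    field_simp
  rw [hfactor]
  exact div_pos (sub_pos.2 (three_mul_sub_lt_sq_mul_sinh hs)) (by positivity)

section optimalShape

variable {s lam : ℝ}

lemma optimalShape_neg (x : ℝ) : optimalShape s lam (-x) = optimalShape s lam x := by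
  simp only [optimalShape, neg_sq, mul_neg, cosh_neg]

lemma optimalShape_one : optimalShape s lam 1 = 0 := by
  simp [optimalShape]

lemma continuous_optimalShape : Continuous (optimalShape s lam) := by
  unfold optimalShape
  fun_prop

lemma hasDerivAt_optimalShape (hs : s ≠ 0) (x : ℝ) :
    HasDerivAt (optimalShape s lam) (lam * (sinh (s * x) / sinh s - x)) x := by
  have hcosh := ((hasDerivAt_id' x).const_mul s).cosh
  have hsq : HasDerivAt (fun y : ℝ ↦ 1 - y ^ 2) (-(2 * x)) x := by
    simpa using (hasDerivAt_pow 2 x).const_sub 1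
  refine ((hsq.const_mul (lam / 2)).sub ((hcosh.const_sub (cosh s)).const_mul
    (lam / (s * sinh s)))).congr_deriv ?_
  field_simp [sinh_ne_zero.2 hs]
  ring

lemma strictAntiOn_optimalShape (hs : 0 < s) (hlam : 0 < lam) :
    StrictAntiOn (optimalShape s lam) (Icc 0 1) := by
  refine strictAntiOn_of_deriv_neg (convex_Icc 0 1) continuous_optimalShape.continuousOn
    fun x hx ↦ ?_
  rw [interior_Icc] at hx
  rw [(hasDerivAt_optimalShape hs.ne' x).deriv]
  have hlt : sinh (s * x) / sinh s < x :=
    (div_lt_iff₀ (sinh_pos_iff.2 hs)).2 (sinh_mul_lt_mul_sinh hs hx.1 hx.2)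
  exact mul_neg_of_pos_of_neg hlam (sub_neg.2 hlt)

lemma optimalShape_pos (hs : 0 < s) (hlam : 0 < lam) {x : ℝ} (hx : x ∈ Ioo (-1) 1) :
    0 < optimalShape s lam x := by
  have hanti := strictAntiOn_optimalShape hs hlam
  have hone : (1 : ℝ) ∈ Icc 0 1 := right_mem_Icc.2 zero_le_one
  rw [← optimalShape_one (s := s) (lam := lam)]
  rcases le_or_gt 0 x with hx₀ | hx₀
  · exact hanti ⟨hx₀, hx.2.le⟩ hone hx.2
  · rw [← optimalShape_neg x]
    exact hanti ⟨by linarith, by linarith [hx.1]⟩ hone (by linarith [hx.1])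

lemma integral_optimalShape (hs : s ≠ 0) :
    ∫ x in (-1 : ℝ)..1, optimalShape s lam x = 2 / 3 * lam * shapeFactor s := by
  have hsinh := sinh_ne_zero.2 hs
  have hprim : ∀ x ∈ uIcc (-1 : ℝ) 1, HasDerivAt
      (fun y ↦ lam / 2 * (y - y ^ 3 / 3) - lam / (s * sinh s) * (cosh s * y - sinh (s * y) / s))
      (optimalShape s lam x) x := by
    intro x _
    have hsinh' := ((hasDerivAt_id' x).const_mul s).sinh
    have hpoly := (hasDerivAt_id' x).sub ((hasDerivAt_pow 3 x).div_const 3)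
    refine ((hpoly.const_mul _).sub ((((hasDerivAt_id' x).const_mul (cosh s)).sub
      (hsinh'.div_const s)).const_mul _)).congr_deriv ?_
    simp only [optimalShape]
    field_simp
    ring
  rw [intervalIntegral.integral_eq_sub_of_hasDerivAt hprim
    (continuous_optimalShape.intervalIntegrable _ _), shapeFactor, tanh_eq_sinh_div_cosh]
  simp only [mul_one, mul_neg_one, sinh_neg]
  field_simp
  ring

lemma not_convexOn_neg_optimalShape (hs : 0 < s) (hlam : 0 < lam) :
    ¬ ConvexOn ℝ (Icc (-1) 1) (fun x ↦ -optimalShape s lam x) := by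
  intro hconv
  have hflat : HasDerivAt (fun x ↦ -optimalShape s lam x) 0 1 := by
    refine (hasDerivAt_optimalShape hs.ne' 1).neg.congr_deriv ?_
    rw [mul_one, div_self (sinh_pos_iff.2 hs).ne', sub_self, mul_zero, neg_zero]
  have hslope := hconv.slope_le_of_hasDerivAt (by norm_num) (by norm_num) zero_lt_one hflat
  rw [slope_def_field, optimalShape_one] at hslope
  linarith [optimalShape_pos hs hlam (x := 0) (by norm_num)]

end optimalShape

theorem optimal_shape_alpha_zero (A B : ℝ) (hA : 0 < A) (hB : 0 < B)
    (lam0 : ℝ)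
    (hlam : lam0 = (3 * A / 2) * (1 - 3 * (Real.sqrt B - Real.tanh (Real.sqrt B)) /
      (B * Real.tanh (Real.sqrt B)))⁻¹)
    (h0 : ℝ → ℝ)
    (hh0 : ∀ x : ℝ, h0 x = lam0 / 2 * (1 - x ^ 2) -
      lam0 / (Real.sqrt B * Real.sinh (Real.sqrt B)) *
        (Real.cosh (Real.sqrt B) - Real.cosh (Real.sqrt B * x))) :
    (∀ x : ℝ, h0 (-x) = h0 x) ∧
    h0 (-1) = 0 ∧ h0 1 = 0 ∧
    StrictAntiOn h0 (Set.Ioo 0 1) ∧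
    (∀ x ∈ Set.Ioo (-1 : ℝ) 1, 0 < h0 x) ∧
    (∫ x in (-1 : ℝ)..1, h0 x) = A ∧
    ¬ ConvexOn ℝ (Set.Icc (-1 : ℝ) 1) (fun x => -h0 x) := by
  set s := √B
  have hs : 0 < s := sqrt_pos.2 hB
  have hlam' : lam0 = 3 * A / 2 * (shapeFactor s)⁻¹ := by
    rw [hlam, shapeFactor, sq_sqrt hB.le]
  have hlam0 : 0 < lam0 := hlam' ▸ mul_pos (by positivity) (inv_pos.2 (shapeFactor_pos hs))
  obtain rfl : h0 = optimalShape s lam0 := funext hh0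
  refine ⟨optimalShape_neg, by rw [optimalShape_neg, optimalShape_one], optimalShape_one,
    (strictAntiOn_optimalShape hs hlam0).mono Ioo_subset_Icc_self,
    fun x ↦ optimalShape_pos hs hlam0, ?_, not_convexOn_neg_optimalShape hs hlam0⟩
  rw [integral_optimalShape hs.ne', hlam']
  field_simp [(shapeFactor_pos hs).ne']
end
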